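/- Let p be a prime and G a finite p-group. Then there exist d ≥ 1 and a word w in the free group F_d on d generators such that the word image w(G) equals the Frattini subgroup Φ(G) (as a set). -/

import Mathlib

/-- The image of the word map on `G` induced by a word `w` in the free group
on `d` generators. -/
def wordImage {d : ℕ} (G : Type*) [Group G] (w : FreeGroup (Fin d)) : Set G :=
  Set.range fun f : Fin d → G => FreeGroup.lift f w

/-- `A` is a word image impostor in `G`: it contains `1`, is invariant under all
automorphisms of `G`, and is not the image of any word map. -/
def IsWordImageImpostor (G : Type*) [Group G] (A : Set G) : Prop :=
  (1 : G) ∈ A ∧ (∀ (φ : G ≃* G), ∀ g ∈ A, φ g ∈ A) ∧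
    ¬ ∃ (d : ℕ) (_ : 1 ≤ d) (w : FreeGroup (Fin d)), A = wordImage G w

/-- `G` is an extraspecial `p`-group: a `p`-group whose center, commutator subgroup
and Frattini subgroup coincide and have order `p`. -/
def IsExtraspecial (p : ℕ) (G : Type*) [Group G] : Prop :=
  IsPGroup p G ∧ Subgroup.center G = commutator G ∧
    Subgroup.center G = frattini G ∧ Nat.card (Subgroup.center G) = p

/-!
In a finite `p`-group every maximal subgroup is normal of index `p`, so it contains every value
`a ^ p * ⁅b, c⁆` of the word `x ^ p * ⁅y, z⁆`. Conversely, modulo the subgroup `N` generated by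
these values the group is elementary abelian, i.e. an `𝔽_p`-vector space, where every nonzero
vector avoids some hyperplane; hence `Φ(G) = N`. In a finite group the subgroup generated by a set
`S ∋ 1` is `S ^ |G|`, and `S ^ n` is the image of the product of `n` copies of the word in
disjoint variables, so `Φ(G)` is the image of `∏_{i < |G|} x_i ^ p * ⁅y_i, z_i⁆`.
-/

open Subgroup Pointwise
open scoped commutatorElement

theorem Order.radical_eq_bot {α : Type*} [CompleteLattice α] [IsModularLattice α]
    [ComplementedLattice α] [IsAtomic α] : Order.radical α = ⊥ := by
  by_contra h
  obtain ⟨a, ha, ha_le⟩ := (eq_bot_or_exists_atom_le (Order.radical α)).resolve_left h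
  obtain ⟨b, hab⟩ := exists_isCompl a
  exact ha.1 (hab.disjoint.eq_bot_of_le
    (ha_le.trans (Order.radical_le_coatom (hab.isAtom_iff_isCoatom.mp ha))))

theorem frattini_eq_bot_of_pow_eq_one {p : ℕ} {Q : Type*} [CommGroup Q] (hp : p.Prime)
    (h : ∀ x : Q, x ^ p = 1) : frattini Q = ⊥ := by
  have := Fact.mk hp
  -- Subgroups of `Q` are the `𝔽_p`-subspaces of `Additive Q`, a complemented atomic lattice.
  let _ : Module (ZMod p) (Additive Q) :=
    AddCommGroup.zmodModule (n := p) fun x => congrArg Additive.ofMul (h x.toMul)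
  let e : Subgroup Q ≃o Submodule (ZMod p) (Additive Q) :=
    Subgroup.toAddSubgroup.trans (AddSubgroup.toZModSubmodule p)
  apply e.injective
  rw [frattini, e.map_radical, Order.radical_eq_bot, e.map_bot]

theorem isSimpleGroup_quotient_of_isCoatom {G : Type*} [Group G] {M : Subgroup G} [M.Normal]
    (hM : IsCoatom M) : IsSimpleGroup (G ⧸ M) := by
  let e : Subgroup (G ⧸ M) ≃o Set.Ici M := QuotientGroup.comapMk'OrderIso M
  have : IsSimpleOrder (Subgroup (G ⧸ M)) :=
    e.isSimpleOrder_iff.mpr (Set.isSimpleOrder_Ici_iff_isCoatom.mpr hM)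
  have : Nontrivial (G ⧸ M) := Subgroup.nontrivial_iff.mp inferInstance
  exact ⟨fun H _ => IsSimpleOrder.eq_bot_or_eq_top H⟩

namespace IsPGroup

variable {p : ℕ} {G : Type*} [Group G] [Finite G]

theorem card_eq_of_isSimpleGroup [IsSimpleGroup G] (hp : p.Prime) (hG : IsPGroup p G) :
    Nat.card G = p := by
  have := Fact.mk hp
  have := hG.isNilpotent
  obtain ⟨n, hn⟩ := IsPGroup.iff_card.mp hG
  have hprime : (Nat.card G).Prime := CommGroup.is_simple_iff_prime_card.mp inferInstance
  rw [hn] at hprime ⊢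
  rw [hprime.eq_one_of_pow, pow_one]

theorem pow_mul_commutatorElement_mem_of_isCoatom (hp : p.Prime) (hG : IsPGroup p G)
    {M : Subgroup G} (hM : IsCoatom M) (a b c : G) : a ^ p * ⁅b, c⁆ ∈ M := by
  have := Fact.mk hp
  have := hG.isNilpotent
  have : M.Normal := Group.normalizerCondition_of_isNilpotent.normal_of_coatom M hM
  have := isSimpleGroup_quotient_of_isCoatom hM
  have hcard := (hG.to_quotient M).card_eq_of_isSimpleGroup hp
  have hcomm : ∀ x y : G ⧸ M, x * y = y * x :=
    IsSimpleGroup.comm_iff_isSolvable.mpr inferInstance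
  rw [← QuotientGroup.ker_mk' M, MonoidHom.mem_ker, map_mul, map_pow, map_commutatorElement,
    ← hcard, pow_card_eq_one', one_mul, commutatorElement_eq_one_iff_mul_comm]
  exact hcomm _ _

end IsPGroup

theorem FreeGroup.lift_map_apply {α β G : Type*} [Group G] (f : β → G) (g : α → β)
    (w : FreeGroup α) : lift f (map g w) = lift (f ∘ g) w :=
  lift_unique ((lift f).comp (map g)) fun _ => by simp

theorem MonoidHom.map_freeGroupLift {α G H : Type*} [Group G] [Group H] (φ : G →* H)
    (f : α → G) (w : FreeGroup α) : φ (FreeGroup.lift f w) = FreeGroup.lift (φ ∘ f) w :=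
  FreeGroup.lift_unique (φ.comp (FreeGroup.lift f)) fun _ => by simp

section WordImage

variable {G : Type*} [Group G] {d : ℕ}

theorem one_mem_wordImage (w : FreeGroup (Fin d)) : (1 : G) ∈ wordImage G w :=
  ⟨1, (FreeGroup.lift_unique (1 : FreeGroup (Fin d) →* G) fun _ => rfl).symm⟩

theorem map_mem_wordImage {H : Type*} [Group H] (φ : G →* H) {w : FreeGroup (Fin d)} {x : G}
    (hx : x ∈ wordImage G w) : φ x ∈ wordImage H w := by
  obtain ⟨f, rfl⟩ := hx
  exact ⟨φ ∘ f, (φ.map_freeGroupLift f w).symm⟩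

instance closure_wordImage_normal (w : FreeGroup (Fin d)) :
    (closure (wordImage G w)).Normal where
  conj_mem x hx g := by
    have hle : closure ((MulAut.conj g : G →* G) '' wordImage G w) ≤ closure (wordImage G w) :=
      closure_mono (Set.image_subset_iff.mpr fun y hy => map_mem_wordImage _ hy)
    exact hle (MonoidHom.map_closure (MulAut.conj g : G →* G) _ ▸ mem_map_of_mem _ hx)

theorem wordImage_quotient_closure_wordImage (w : FreeGroup (Fin d)) :
    wordImage (G ⧸ closure (wordImage G w)) w = {1} := by
  refine Set.eq_singleton_iff_unique_mem.mpr ⟨one_mem_wordImage w, ?_⟩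
  rintro _ ⟨f, rfl⟩
  obtain ⟨g, rfl⟩ : ∃ g : Fin d → G, QuotientGroup.mk' _ ∘ g = f :=
    ⟨fun i => (f i).out, funext fun i => QuotientGroup.out_eq' (f i)⟩
  change FreeGroup.lift _ w = 1
  rw [← MonoidHom.map_freeGroupLift, ← MonoidHom.mem_ker, QuotientGroup.ker_mk']
  exact subset_closure ⟨g, rfl⟩

end WordImage

section PowCard

variable {G : Type*} [Group G] [Finite G] {S : Set G}

theorem Set.pow_eq_pow_card_of_one_mem (h1 : 1 ∈ S) {k : ℕ} (hk : Nat.card G ≤ k) :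
    S ^ k = S ^ Nat.card G := by
  classical
  have := Fintype.ofFinite G
  have hcard := Group.card_pow_eq_card_pow_card_univ S k (by rwa [← Nat.card_eq_fintype_card])
  simp only [← Nat.card_eq_fintype_card, Nat.card_coe_set_eq] at hcard
  exact (Set.eq_of_subset_of_ncard_le (Set.pow_subset_pow_right h1 hk) hcard.le).symm

theorem Subgroup.coe_closure_eq_pow_card (h1 : 1 ∈ S) : (closure S : Set G) = S ^ Nat.card G := by
  refine subset_antisymm ?_ fun x hx => ?_
  · let T : Submonoid G :=
      { carrier := S ^ Nat.card G
        one_mem' := Set.one_mem_pow h1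
        mul_mem' := fun ha hb => by
          rw [← Set.pow_eq_pow_card_of_one_mem h1 (Nat.le_add_right _ (Nat.card G)), pow_add]
          exact Set.mul_mem_mul ha hb }
    have hST : Submonoid.closure S ≤ T :=
      Submonoid.closure_le.mpr (Set.subset_pow h1 Nat.card_pos.ne')
    rw [← coe_toSubmonoid, closure_toSubmonoid_of_finite]
    exact hST
  · rw [← Set.pow_mul_subgroupClosure ⟨1, h1⟩ (Nat.card G), ← mul_one x]
    exact Set.mul_mem_mul hx (one_mem (closure S))

end PowCard

section DisjointWords

variable {G : Type*} [Group G] {a b d : ℕ}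

def wordDisjointMul (w : FreeGroup (Fin a)) (v : FreeGroup (Fin b)) : FreeGroup (Fin (a + b)) :=
  FreeGroup.map (Fin.castAdd b) w * FreeGroup.map (Fin.natAdd a) v

theorem wordImage_wordDisjointMul (w : FreeGroup (Fin a)) (v : FreeGroup (Fin b)) :
    wordImage G (wordDisjointMul w v) = wordImage G w * wordImage G v := by
  ext x
  simp only [wordImage, wordDisjointMul, map_mul, FreeGroup.lift_map_apply, Set.mem_mul,
    Set.mem_range]
  constructor
  · rintro ⟨f, rfl⟩
    exact ⟨_, ⟨f ∘ Fin.castAdd b, rfl⟩, _, ⟨f ∘ Fin.natAdd a, rfl⟩, rfl⟩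
  · rintro ⟨_, ⟨f, rfl⟩, _, ⟨g, rfl⟩, rfl⟩
    refine ⟨Fin.append f g, ?_⟩
    simp [Function.comp_def, Fin.append_left, Fin.append_right]

-- Indexed by `d * n` because `d * (n + 1)` unfolds definitionally to `d * n + d`.
def wordDisjointPow (w : FreeGroup (Fin d)) : (n : ℕ) → FreeGroup (Fin (d * n))
  | 0 => 1
  | n + 1 => wordDisjointMul (wordDisjointPow w n) w

theorem wordImage_wordDisjointPow (w : FreeGroup (Fin d)) (n : ℕ) :
    wordImage G (wordDisjointPow w n) = wordImage G w ^ n := by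
  induction n with
  | zero => simp [wordImage, wordDisjointPow, Set.singleton_one]
  | succ n ih => rw [wordDisjointPow, wordImage_wordDisjointMul, ih, pow_succ]

theorem coe_closure_wordImage [Finite G] (w : FreeGroup (Fin d)) :
    (closure (wordImage G w) : Set G) = wordImage G (wordDisjointPow w (Nat.card G)) := by
  rw [wordImage_wordDisjointPow, Subgroup.coe_closure_eq_pow_card (one_mem_wordImage w)]

end DisjointWords

def powCommWord (p : ℕ) : FreeGroup (Fin 3) :=
  FreeGroup.of (0 : Fin 3) ^ p * ⁅FreeGroup.of (1 : Fin 3), FreeGroup.of (2 : Fin 3)⁆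

theorem mem_wordImage_powCommWord {p : ℕ} {G : Type*} [Group G] {x : G} :
    x ∈ wordImage G (powCommWord p) ↔ ∃ a b c : G, a ^ p * ⁅b, c⁆ = x := by
  simp only [wordImage, powCommWord, Set.mem_range, map_mul, map_pow, map_commutatorElement,
    FreeGroup.lift_apply_of]
  constructor
  · rintro ⟨f, rfl⟩
    exact ⟨f 0, f 1, f 2, rfl⟩
  · rintro ⟨a, b, c, rfl⟩
    exact ⟨![a, b, c], rfl⟩

theorem IsPGroup.frattini_eq_closure_wordImage_powCommWord {p : ℕ} {G : Type*} [Group G]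
    [Finite G] (hp : p.Prime) (hG : IsPGroup p G) :
    frattini G = closure (wordImage G (powCommWord p)) := by
  refine le_antisymm ?_ (le_iInf₂ fun M hM => (closure_le M).mpr ?_)
  · set N := closure (wordImage G (powCommWord p))
    have hlaw (x y z : G ⧸ N) : x ^ p * ⁅y, z⁆ = 1 := by
      rw [← Set.mem_singleton_iff, ← wordImage_quotient_closure_wordImage]
      exact mem_wordImage_powCommWord.mpr ⟨x, y, z, rfl⟩
    let _ : CommGroup (G ⧸ N) :=
      { mul_comm x y := commutatorElement_eq_one_iff_mul_comm.mp (by simpa using hlaw 1 x y) }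
    have hbot : frattini (G ⧸ N) = ⊥ :=
      frattini_eq_bot_of_pow_eq_one hp fun x => by simpa using hlaw x 1 1
    have hle := frattini_le_comap_frattini_of_surjective (QuotientGroup.mk'_surjective N)
    rwa [hbot, MonoidHom.comap_bot, QuotientGroup.ker_mk'] at hle
  · rintro _ hx
    obtain ⟨a, b, c, rfl⟩ := mem_wordImage_powCommWord.mp hx
    exact hG.pow_mul_commutatorElement_mem_of_isCoatom hp hM a b c

/-- The Frattini subgroup of a finite p-group is a word image. -/
theorem frattini_is_word_image {p : ℕ} (hp : p.Prime) (G : Type*) [Group G]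
    [Finite G] (hG : IsPGroup p G) :
    ∃ (d : ℕ) (_ : 1 ≤ d) (w : FreeGroup (Fin d)),
      wordImage G w = (frattini G : Set G) := by
  refine ⟨3 * Nat.card G, by have := Nat.card_pos (α := G); omega,
    wordDisjointPow (powCommWord p) (Nat.card G), ?_⟩
  rw [hG.frattini_eq_closure_wordImage_powCommWord hp, coe_closure_wordImage]
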